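/- arXiv:math/0111285 — 4 statements merged into one kernel-verified Lean document; each statement's English description precedes it below -/
import Mathlib

section
/- Let a < 0 < b and let y ∈ C³(ℝ,ℝ) satisfy: x·y(x) < 0 for all x ≠ 0; y is bounded below and has at most one critical point, which, if it exists, is a local extremum of y; y'(0) = a and y''(0) = 2b; and the Schwarzian derivative (Sy)(x) < 0 for every x with y'(x) ≠ 0. Then r(x;a,b) < y(x) for all x > 0, and r(x;a,b) > y(x) for all x ∈ (a/b, 0). -/
open Real Set

/-- Schwarzian derivative of `f` at `x`. -/
noncomputable def Schwarzian (f : ℝ → ℝ) (x : ℝ) : ℝ :=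
  iteratedDeriv 3 f x / deriv f x - (3 / 2) * (iteratedDeriv 2 f x / deriv f x) ^ 2

/-- Hypotheses (H1)-(H3): `f ∈ C³`, negative feedback with `f'(0) < 0`,
boundedness below, at most one critical point which is a local extremum,
and negative Schwarzian wherever `f' ≠ 0`. -/
def HypH (f : ℝ → ℝ) : Prop :=
  ContDiff ℝ 3 f ∧
  (∀ x : ℝ, x ≠ 0 → x * f x < 0) ∧
  deriv f 0 < 0 ∧
  (∃ C : ℝ, ∀ x : ℝ, C ≤ f x) ∧
  (∀ u v : ℝ, deriv f u = 0 → deriv f v = 0 → u = v) ∧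
  (∀ u : ℝ, deriv f u = 0 → IsLocalExtr f u) ∧
  (∀ u : ℝ, deriv f u ≠ 0 → Schwarzian f u < 0)

open Filter Topology

/-!
Where `y' < 0`, negativity of the Schwarzian is equivalent to strict convexity of
`g = (-y')^(-1/2)`, since `g'' = -(Sy) g / 2`. By `y'(0) = a` and `y''(0) = 2b` the tangent line of
`g` at `0` is `(b t - a) / (-a)^(3/2)`, and `g` lying above it rearranges to `y' > r'`. This holds
on `(a/b, ∞) \ {0}`: where `y' ≥ 0` trivially, as `r' < 0`; where `y'(t) < 0`, the convexity argument
applies on the interval between `0` and `t`, because a zero of `y'` there would be the unique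
critical point with `y' < 0` on both sides, hence not a local extremum. So `y - r` is strictly
increasing on `(a/b, 0]` and on `[0, ∞)`, and it vanishes at `0`.
-/

-- The function `r(·; a, b)`.
noncomputable def rationalModel (a b x : ℝ) : ℝ := a ^ 2 * x / (a - b * x)

lemma hasDerivAt_rationalModel (a b : ℝ) {t : ℝ} (ht : a - b * t ≠ 0) :
    HasDerivAt (rationalModel a b) (a ^ 3 / (a - b * t) ^ 2) t := by
  have hnum : HasDerivAt (fun s : ℝ => a ^ 2 * s) (a ^ 2) t := by
    simpa using (hasDerivAt_id t).const_mul (a ^ 2)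
  have hden : HasDerivAt (fun s : ℝ => a - b * s) (-b) t := by
    simpa using ((hasDerivAt_id t).const_mul b).const_sub a
  refine (hnum.div hden ht).congr_deriv ?_
  field_simp
  ring

lemma hasDerivAt_sqrt_neg {u : ℝ → ℝ} {u' x : ℝ} (hu : HasDerivAt u u' x) (hx : u x < 0) :
    HasDerivAt (fun t => √(-u t)) (-u' / (2 * √(-u x))) x :=
  hu.neg.sqrt (neg_pos.2 hx).ne'

lemma hasDerivAt_inv_sqrt_neg {u : ℝ → ℝ} {u' x : ℝ} (hu : HasDerivAt u u' x) (hx : u x < 0) :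
    HasDerivAt (fun t => (√(-u t))⁻¹) (u' / (2 * √(-u x) ^ 3)) x := by
  have hσ : 0 < √(-u x) := sqrt_pos.2 (neg_pos.2 hx)
  refine ((hasDerivAt_sqrt_neg hu hx).inv hσ.ne').congr_deriv ?_
  field_simp

lemma hasDerivAt_div_two_sqrt_neg_pow_three {u v : ℝ → ℝ} {v' x : ℝ} (hu : HasDerivAt u (v x) x)
    (hv : HasDerivAt v v' x) (hx : u x < 0) :
    HasDerivAt (fun t => v t / (2 * √(-u t) ^ 3))
      ((2 * v' * (-u x) + 3 * v x ^ 2) / (4 * √(-u x) ^ 5)) x := by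
  have hσ : 0 < √(-u x) := sqrt_pos.2 (neg_pos.2 hx)
  have hσ2 : -u x = √(-u x) ^ 2 := (sq_sqrt (neg_pos.2 hx).le).symm
  have hden : HasDerivAt (fun t => 2 * √(-u t) ^ 3)
      (2 * (3 * √(-u x) ^ 2 * (-v x / (2 * √(-u x))))) x := by
    simpa using ((hasDerivAt_sqrt_neg hu hx).pow 3).const_mul 2
  refine (hv.div hden (by positivity)).congr_deriv ?_
  set σ := √(-u x)
  rw [hσ2]
  field_simp
  ring

lemma schwarzian_neg_iff {f : ℝ → ℝ} {x : ℝ} (hx : deriv f x ≠ 0) :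
    Schwarzian f x < 0 ↔ 2 * iteratedDeriv 3 f x * deriv f x < 3 * iteratedDeriv 2 f x ^ 2 := by
  have hS : Schwarzian f x = (2 * iteratedDeriv 3 f x * deriv f x - 3 * iteratedDeriv 2 f x ^ 2) /
      (2 * deriv f x ^ 2) := by
    rw [Schwarzian]
    field_simp
  rw [hS, div_neg_iff, sub_neg]
  have : 0 < 2 * deriv f x ^ 2 := by positivity
  constructor
  · rintro (⟨-, h⟩ | ⟨h, -⟩) <;> linarith
  · intro h; exact Or.inr ⟨by linarith, this⟩

lemma hasDerivAt_iteratedDeriv {f : ℝ → ℝ} {n : WithTop ℕ∞} (hf : ContDiff ℝ n f) {m : ℕ}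
    (hm : m < n) (x : ℝ) : HasDerivAt (iteratedDeriv m f) (iteratedDeriv (m + 1) f x) x := by
  rw [iteratedDeriv_succ]
  exact (hf.differentiable_iteratedDeriv m hm x).hasDerivAt

lemma StrictConvexOn.add_mul_sub_lt_of_hasDerivAt {s : Set ℝ} {f : ℝ → ℝ} {f' x y : ℝ}
    (hf : StrictConvexOn ℝ s f) (hx : x ∈ s) (hy : y ∈ s) (hxy : y ≠ x)
    (hf' : HasDerivAt f f' x) : f x + f' * (y - x) < f y := by
  rcases hxy.lt_or_gt with hlt | hlt
  · have := hf.slope_lt_of_hasDerivAt hy hx hlt hf'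
    rw [slope_def_field, div_lt_iff₀ (sub_pos.2 hlt)] at this
    linarith
  · have := hf.lt_slope_of_hasDerivAt hx hy hlt hf'
    rw [slope_def_field, lt_div_iff₀ (sub_pos.2 hlt)] at this
    linarith

lemma strictConvexOn_inv_sqrt_neg_deriv {y : ℝ → ℝ} (hy : ContDiff ℝ 3 y) {s : Set ℝ}
    (hs : Convex ℝ s) (hneg : ∀ t ∈ s, deriv y t < 0) (hS : ∀ t ∈ s, Schwarzian y t < 0) :
    StrictConvexOn ℝ s (fun t => (√(-deriv y t))⁻¹) := by
  have hy₂ (t : ℝ) : HasDerivAt (deriv y) (iteratedDeriv 2 y t) t := by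
    simpa only [iteratedDeriv_one] using hasDerivAt_iteratedDeriv hy (m := 1) (by norm_num) t
  have hy₃ (t : ℝ) : HasDerivAt (iteratedDeriv 2 y) (iteratedDeriv 3 y t) t :=
    hasDerivAt_iteratedDeriv hy (by norm_num) t
  set g' := fun t => iteratedDeriv 2 y t / (2 * √(-deriv y t) ^ 3)
  have hg (t : ℝ) (ht : t ∈ s) : HasDerivAt (fun t => (√(-deriv y t))⁻¹) (g' t) t :=
    hasDerivAt_inv_sqrt_neg (hy₂ t) (hneg t ht)
  have hg'_mono : StrictMonoOn g' (interior s) := by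
    refine strictMonoOn_of_deriv_pos hs.interior (fun t ht => ?_) fun t ht => ?_
    · exact (hasDerivAt_div_two_sqrt_neg_pow_three (hy₂ t) (hy₃ t)
        (hneg t (interior_subset ht))).continuousAt.continuousWithinAt
    · have ht : t ∈ s := interior_subset (interior_subset ht)
      rw [(hasDerivAt_div_two_sqrt_neg_pow_three (hy₂ t) (hy₃ t) (hneg t ht)).deriv]
      have hS' := (schwarzian_neg_iff (hneg t ht).ne).1 (hS t ht)
      have hσ : 0 < √(-deriv y t) := sqrt_pos.2 (neg_pos.2 (hneg t ht))
      exact div_pos (by linarith) (by positivity)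
  exact (hg'_mono.congr fun t ht => (hg t (interior_subset ht)).deriv.symm).strictConvexOn_of_deriv
    hs fun t ht => (hg t ht).continuousAt.continuousWithinAt

lemma lt_deriv_of_schwarzian_neg_on {y : ℝ → ℝ} {a b : ℝ} (hy : ContDiff ℝ 3 y)
    (hy' : deriv y 0 = a) (hy'' : iteratedDeriv 2 y 0 = 2 * b) {s : Set ℝ} (hs : Convex ℝ s)
    (h0 : 0 ∈ s) (hneg : ∀ t ∈ s, deriv y t < 0) (hS : ∀ t ∈ s, Schwarzian y t < 0) {t : ℝ}
    (ht : t ∈ s) (ht0 : t ≠ 0) (hbt : a < b * t) :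
    a ^ 3 / (a - b * t) ^ 2 < deriv y t := by
  have ha : a < 0 := hy' ▸ hneg 0 h0
  have hg0 : HasDerivAt (fun t => (√(-deriv y t))⁻¹) (2 * b / (2 * √(-a) ^ 3)) 0 := by
    have h := hasDerivAt_iteratedDeriv hy (m := 1) (by norm_num) 0
    rw [iteratedDeriv_one] at h
    simpa only [hy', hy''] using hasDerivAt_inv_sqrt_neg h (hneg 0 h0)
  have htangent := (strictConvexOn_inv_sqrt_neg_deriv hy hs hneg hS).add_mul_sub_lt_of_hasDerivAt
    h0 ht ht0 hg0
  simp only [hy', sub_zero] at htangent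
  have hσ : 0 < √(-a) := sqrt_pos.2 (neg_pos.2 ha)
  have hσ2 : √(-a) ^ 2 = -a := sq_sqrt (neg_pos.2 ha).le
  have hρ : 0 < √(-deriv y t) := sqrt_pos.2 (neg_pos.2 (hneg t ht))
  have hρ2 : √(-deriv y t) ^ 2 = -deriv y t := sq_sqrt (neg_pos.2 (hneg t ht)).le
  set σ := √(-a)
  set ρ := √(-deriv y t)
  have hlin : (b * t - a) * ρ < σ ^ 3 := by
    have h : (b * t - a) / σ ^ 3 < ρ⁻¹ := by
      convert htangent using 1
      rw [show a = -σ ^ 2 by linarith]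
      field_simp
      ring
    rwa [div_lt_iff₀ (by positivity), ← div_eq_inv_mul, lt_div_iff₀ hρ] at h
  have hsq : (b * t - a) ^ 2 * (-deriv y t) < (-a) ^ 3 :=
    calc (b * t - a) ^ 2 * (-deriv y t) = ((b * t - a) * ρ) ^ 2 := by rw [mul_pow, hρ2]
      _ < (σ ^ 3) ^ 2 := pow_lt_pow_left₀ hlin (by nlinarith) two_ne_zero
      _ = (-a) ^ 3 := by rw [← hσ2]; ring
  rw [div_lt_iff₀ (by nlinarith)]
  nlinarith

lemma StrictAntiOn.not_isLocalExtr {f : ℝ → ℝ} {p c q : ℝ} (hf : StrictAntiOn f (Icc p q))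
    (hpc : p < c) (hcq : c < q) : ¬IsLocalExtr f c := by
  have hc : c ∈ Icc p q := ⟨hpc.le, hcq.le⟩
  rintro (hmin | hmax)
  · obtain ⟨t, hct, ht⟩ := ((hmin.filter_mono nhdsWithin_le_nhds).and (Ioo_mem_nhdsGT hcq)).exists
    exact hct.not_gt (hf hc ⟨hpc.le.trans ht.1.le, ht.2.le⟩ ht.1)
  · obtain ⟨t, htc, ht⟩ := ((hmax.filter_mono nhdsWithin_le_nhds).and (Ioo_mem_nhdsLT hpc)).exists
    exact htc.not_gt (hf ⟨ht.1.le, ht.2.le.trans hcq.le⟩ hc ht.2)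

lemma Continuous.exists_mem_uIcc_eq_zero {g : ℝ → ℝ} (hg : Continuous g) {p q : ℝ}
    (hp : g p < 0) (hq : 0 ≤ g q) : ∃ z ∈ uIcc p q, g z = 0 :=
  intermediate_value_uIcc hg.continuousOn (mem_uIcc.2 (Or.inl ⟨hp.le, hq⟩))

lemma deriv_neg_of_unique_critical_point {y : ℝ → ℝ} (hy : ContDiff ℝ 1 y)
    (hcrit₁ : ∀ u v : ℝ, deriv y u = 0 → deriv y v = 0 → u = v)
    (hcrit₂ : ∀ u : ℝ, deriv y u = 0 → IsLocalExtr y u) {p q : ℝ}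
    (hp : deriv y p < 0) (hq : deriv y q < 0) : ∀ s ∈ Icc p q, deriv y s < 0 := by
  have hcont : Continuous (deriv y) := hy.continuous_deriv le_rfl
  by_contra! ⟨s, hs, hs0⟩
  obtain ⟨c, hc, hc0⟩ := hcont.exists_mem_uIcc_eq_zero hp hs0
  rw [uIcc_of_le hs.1] at hc
  have hpc : p < c := hc.1.lt_of_ne (by rintro rfl; linarith)
  have hcq : c < q := (hc.2.trans hs.2).lt_of_ne (by rintro rfl; linarith)
  have hneg : ∀ t ∈ Icc p q, t ≠ c → deriv y t < 0 := by
    intro t ht htc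
    by_contra! ht0
    rcases htc.lt_or_gt with htc | htc
    · obtain ⟨z, hz, hz0⟩ := hcont.exists_mem_uIcc_eq_zero hp ht0
      rw [uIcc_of_le ht.1] at hz
      exact (hz.2.trans_lt htc).ne (hcrit₁ z c hz0 hc0)
    · obtain ⟨z, hz, hz0⟩ := hcont.exists_mem_uIcc_eq_zero hq ht0
      rw [uIcc_of_ge ht.2] at hz
      exact (htc.trans_le hz.1).ne' (hcrit₁ z c hz0 hc0)
  have hanti {l r : ℝ} (hlr : Icc l r ⊆ Icc p q) (hc : c ∉ Ioo l r) :
      StrictAntiOn y (Icc l r) := by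
    refine strictAntiOn_of_deriv_neg (convex_Icc l r) hy.continuous.continuousOn fun t ht => ?_
    rw [interior_Icc] at ht
    exact hneg t (hlr (Ioo_subset_Icc_self ht)) (by rintro rfl; exact hc ht)
  have hanti_pq : StrictAntiOn y (Icc p q) := by
    rw [← Icc_union_Icc_eq_Icc hpc.le hcq.le]
    exact (hanti (Icc_subset_Icc_right hcq.le) (by simp)).union
      (hanti (Icc_subset_Icc_left hpc.le) (by simp)) (isGreatest_Icc hpc.le) (isLeast_Icc hcq.le)
  exact hanti_pq.not_isLocalExtr hpc hcq (hcrit₂ c hc0)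

lemma lt_deriv_of_schwarzian_neg {y : ℝ → ℝ} {a b : ℝ} (ha : a < 0) (hb : 0 < b)
    (hy : ContDiff ℝ 3 y) (hcrit₁ : ∀ u v : ℝ, deriv y u = 0 → deriv y v = 0 → u = v)
    (hcrit₂ : ∀ u : ℝ, deriv y u = 0 → IsLocalExtr y u) (hy' : deriv y 0 = a)
    (hy'' : iteratedDeriv 2 y 0 = 2 * b) (hS : ∀ u : ℝ, deriv y u ≠ 0 → Schwarzian y u < 0)
    {t : ℝ} (ht : a / b < t) (ht0 : t ≠ 0) : a ^ 3 / (a - b * t) ^ 2 < deriv y t := by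
  have hbt : a < b * t := by rwa [div_lt_iff₀ hb, mul_comm] at ht
  rcases le_or_gt 0 (deriv y t) with hpos | hneg
  · exact (div_neg_of_neg_of_pos (Odd.pow_neg (by decide) ha)
      (sq_pos_of_neg (by linarith))).trans_le hpos
  have hy₁ : ContDiff ℝ 1 y := hy.of_le (by norm_num)
  have hneg_uIcc : ∀ s ∈ uIcc 0 t, deriv y s < 0 := by
    rcases le_total 0 t with h0t | ht0
    · rw [uIcc_of_le h0t]
      exact deriv_neg_of_unique_critical_point hy₁ hcrit₁ hcrit₂ (hy' ▸ ha) hneg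
    · rw [uIcc_of_ge ht0]
      exact deriv_neg_of_unique_critical_point hy₁ hcrit₁ hcrit₂ hneg (hy' ▸ ha)
  exact lt_deriv_of_schwarzian_neg_on hy hy' hy'' (convex_uIcc 0 t) left_mem_uIcc
    hneg_uIcc (fun s hs => hS s (hneg_uIcc s hs).ne) right_mem_uIcc ht0 hbt

lemma strictMonoOn_sub_of_hasDerivAt_lt {f g f' g' : ℝ → ℝ} {p q : ℝ}
    (hf : ∀ t ∈ Icc p q, HasDerivAt f (f' t) t) (hg : ∀ t ∈ Icc p q, HasDerivAt g (g' t) t)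
    (hlt : ∀ t ∈ Ioo p q, f' t < g' t) : StrictMonoOn (g - f) (Icc p q) := by
  refine strictMonoOn_of_deriv_pos (convex_Icc p q)
    (fun t ht => ((hg t ht).sub (hf t ht)).continuousAt.continuousWithinAt) fun t ht => ?_
  rw [interior_Icc] at ht
  rw [((hg t (Ioo_subset_Icc_self ht)).sub (hf t (Ioo_subset_Icc_self ht))).deriv]
  exact sub_pos.2 (hlt t ht)

lemma eq_zero_of_forall_mul_neg {y : ℝ → ℝ} (hy : ContinuousAt y 0)
    (hfeed : ∀ x : ℝ, x ≠ 0 → x * y x < 0) : y 0 = 0 :=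
  le_antisymm
    (le_of_tendsto (hy.tendsto.mono_left nhdsWithin_le_nhds : Tendsto y (𝓝[>] 0) _)
      (eventually_nhdsWithin_of_forall fun t (ht : 0 < t) =>
        (neg_of_mul_neg_right (hfeed t ht.ne') ht.le).le))
    (ge_of_tendsto (hy.tendsto.mono_left nhdsWithin_le_nhds : Tendsto y (𝓝[<] 0) _)
      (eventually_nhdsWithin_of_forall fun t (ht : t < 0) =>
        (pos_of_mul_neg_right (hfeed t ht.ne) ht.le).le))

theorem rational_minorant_majorant_general
    (a b : ℝ) (ha : a < 0) (hb : 0 < b) (y : ℝ → ℝ)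
    (hy : ContDiff ℝ 3 y)
    (hfeed : ∀ x : ℝ, x ≠ 0 → x * y x < 0)
    (hcrit₁ : ∀ u v : ℝ, deriv y u = 0 → deriv y v = 0 → u = v)
    (hcrit₂ : ∀ u : ℝ, deriv y u = 0 → IsLocalExtr y u)
    (hy' : deriv y 0 = a) (hy'' : iteratedDeriv 2 y 0 = 2 * b)
    (hS : ∀ u : ℝ, deriv y u ≠ 0 → Schwarzian y u < 0) :
    (∀ x : ℝ, 0 < x → a ^ 2 * x / (a - b * x) < y x) ∧
    (∀ x : ℝ, a / b < x → x < 0 → a ^ 2 * x / (a - b * x) > y x) := by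
  have hy0 : y 0 = 0 := eq_zero_of_forall_mul_neg hy.continuous.continuousAt hfeed
  have hmono {p q : ℝ} (hp : a / b < p) (h0 : (0 : ℝ) ∉ Ioo p q) :
      StrictMonoOn (y - rationalModel a b) (Icc p q) := by
    refine strictMonoOn_sub_of_hasDerivAt_lt (fun t ht => hasDerivAt_rationalModel a b ?_)
      (fun t _ => (hy.differentiable (by norm_num) t).hasDerivAt) fun t ht =>
      lt_deriv_of_schwarzian_neg ha hb hy hcrit₁ hcrit₂ hy' hy'' hS (hp.trans ht.1)
        (by rintro rfl; exact h0 ht)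
    have := (div_lt_iff₀ hb).1 (hp.trans_le ht.1)
    linarith
  constructor
  · intro x hx
    have h := hmono (div_neg_of_neg_of_pos ha hb) (by simp) (left_mem_Icc.2 hx.le)
      (right_mem_Icc.2 hx.le) hx
    simp only [Pi.sub_apply, rationalModel, hy0, mul_zero, sub_zero, zero_div] at h
    linarith
  · intro x hax hx
    have h := hmono hax (by simp) (left_mem_Icc.2 hx.le) (right_mem_Icc.2 hx.le) hx
    simp only [Pi.sub_apply, rationalModel, hy0, mul_zero, sub_zero, zero_div] at h
    linarith

/-- Lemma 2.1: every `y ∈ K_{a,b}` with strictly negative Schwarzian lies strictly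
above `r(·;a,b)` on `(0, ∞)` and strictly below it on `(a/b, 0)`. -/
theorem rational_minorant_majorant
    (a b : ℝ) (ha : a < 0) (hb : 0 < b) (y : ℝ → ℝ)
    (hy : ContDiff ℝ 3 y)
    (hfeed : ∀ x : ℝ, x ≠ 0 → x * y x < 0)
    (hbdd : ∃ C : ℝ, ∀ x : ℝ, C ≤ y x)
    (hcrit₁ : ∀ u v : ℝ, deriv y u = 0 → deriv y v = 0 → u = v)
    (hcrit₂ : ∀ u : ℝ, deriv y u = 0 → IsLocalExtr y u)
    (hy' : deriv y 0 = a) (hy'' : iteratedDeriv 2 y 0 = 2 * b)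
    (hS : ∀ u : ℝ, deriv y u ≠ 0 → Schwarzian y u < 0) :
    (∀ x : ℝ, 0 < x → a ^ 2 * x / (a - b * x) < y x) ∧
    (∀ x : ℝ, a / b < x → x < 0 → a ^ 2 * x / (a - b * x) > y x) :=
  rational_minorant_majorant_general a b ha hb y hy hfeed hcrit₁ hcrit₂ hy' hy'' hS
end

section
/- Let f ∈ C³(ℝ,ℝ) satisfy hypotheses (H1)–(H3) with f''(0) > 0 and f'(0) < −1. With a = f'(0), b = f''(0)/2, x₂ = (a + a²)/b, ν = 2A'(0)/A''(0), and r, A, R as in the context, one has (A(x) − R(x))·x > 0 for every x ∈ (ν, x₂) with x ≠ 0. -/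
open Real Set

/-- The rational comparison function `r(x; a, b) = a²x/(a - bx)`. -/
noncomputable def rfun (a b : ℝ) (x : ℝ) : ℝ := a ^ 2 * x / (a - b * x)

/-- `A(x) = x + r(x) + (1/r(x)) ∫_x^0 r(t) dt`, with `A(0) = 0`. -/
noncomputable def Afun (a b : ℝ) (x : ℝ) : ℝ :=
  if x = 0 then 0 else x + rfun a b x + (1 / rfun a b x) * ∫ t in x..0, rfun a b t

/-- `B(x) = (1/r(x)) ∫_{-r(x)}^0 r(s) ds`, with `B(0) = 0`. -/
noncomputable def Bfun (a b : ℝ) (x : ℝ) : ℝ :=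
  if x = 0 then 0 else (1 / rfun a b x) * ∫ s in (-(rfun a b x))..0, rfun a b s

/-- `D(x) = A(x)` if `r(x) < -x`, and `D(x) = B(x)` otherwise. -/
noncomputable def Dfun (a b : ℝ) (x : ℝ) : ℝ :=
  if rfun a b x < -x then Afun a b x else Bfun a b x


/-!
With `u = (a - b x)/a`, the integral in `A` is elementary and `(A(x) - R(x))·x` becomes
`(a/b)² (4a(1-u)⁴ / (u(u+2)q) + w(u) / (2(u+2)))`, where `q = 2 + (6a+1)u = 6(A'(0) - (A''(0)/2)x)`
is negative exactly when `x > ν`, and `w(u) = 2u(u+2) log u - (u-1)(5u+1)`.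
Both summands are then positive; for the second this is the inequality `w(u) > 0` for `u ≠ 1`,
which holds because `log u - (u-1)(5u+1)/(2u(u+2))` vanishes at `1` and has derivative
`(u-1)³/(u²(u+2)²)`.
-/

theorem hasDerivAt_log_sub_div {u : ℝ} (hu : 0 < u) :
    HasDerivAt (fun y => log y - (y - 1) * (5 * y + 1) / (2 * y * (y + 2)))
      ((u - 1) ^ 3 / (u ^ 2 * (u + 2) ^ 2)) u := by
  have hden : 2 * u * (u + 2) ≠ 0 := by positivity
  have hid := hasDerivAt_id u
  refine ((hasDerivAt_log hu.ne').sub (((hid.sub_const 1).mul ((hid.const_mul 5).add_const 1)).div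
    ((hid.const_mul 2).mul (hid.add_const 2)) hden)).congr_deriv ?_
  simp only [id, Pi.mul_apply]
  field_simp
  ring

theorem sub_one_mul_five_mul_add_one_lt_mul_log {u : ℝ} (hu : 0 < u) (hu1 : u ≠ 1) :
    (u - 1) * (5 * u + 1) < 2 * u * (u + 2) * log u := by
  set g : ℝ → ℝ := fun y => log y - (y - 1) * (5 * y + 1) / (2 * y * (y + 2))
  have hg : ∀ y, 0 < y → HasDerivAt g ((y - 1) ^ 3 / (y ^ 2 * (y + 2) ^ 2)) y :=
    fun y hy => hasDerivAt_log_sub_div hy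
  have hcont : ContinuousOn g (Ioi 0) := fun y hy => (hg y hy).continuousAt.continuousWithinAt
  have hg_lt : g 1 < g u := by
    rcases hu1.lt_or_gt with hlt | hgt
    · refine strictAntiOn_of_deriv_neg (convex_Ioc 0 1) (hcont.mono Ioc_subset_Ioi_self) ?_
        ⟨hu, hlt.le⟩ ⟨one_pos, le_rfl⟩ hlt
      intro y hy
      rw [interior_Ioc] at hy
      rw [(hg y hy.1).deriv]
      have hy0 := hy.1
      exact div_neg_of_neg_of_pos (Odd.pow_neg (by decide) (by linarith [hy.2])) (by positivity)
    · refine strictMonoOn_of_deriv_pos (convex_Ici 1)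
        (hcont.mono fun y (hy : 1 ≤ y) => one_pos.trans_le hy) ?_ self_mem_Ici hgt.le hgt
      intro y hy
      rw [interior_Ici] at hy
      have hy0 : 0 < y := one_pos.trans hy
      rw [(hg y hy0).deriv]
      exact div_pos (pow_pos (by linarith [mem_Ioi.mp hy]) 3) (by positivity)
  have hg1 : g 1 = 0 := by norm_num [g]
  have hpos : (u - 1) * (5 * u + 1) / (2 * u * (u + 2)) < log u := by
    simpa [g, hg1, sub_pos] using hg_lt
  rw [div_lt_iff₀ (by positivity)] at hpos
  linarith

theorem integral_rfun {a b x : ℝ} (hb : b ≠ 0) (hx : 0 < (a - b * x) / a) :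
    ∫ t in x..0, rfun a b t = a ^ 2 / b * x + a ^ 3 / b ^ 2 * log ((a - b * x) / a) := by
  have ha : a ≠ 0 := by rintro rfl; simp at hx
  have hden : ∀ t ∈ uIcc x 0, a - b * t ≠ 0 := by
    intro t ht
    have hbetween : t * (t - x) ≤ 0 := by
      rcases mem_uIcc.mp ht with ⟨h₁, h₂⟩ | ⟨h₁, h₂⟩
      · exact mul_nonpos_of_nonpos_of_nonneg h₂ (by linarith)
      · exact mul_nonpos_of_nonneg_of_nonpos h₁ (by linarith)
    have hlin : ∀ s, (a - b * s) / a = 1 - b / a * s := fun s => by field_simp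
    rw [hlin] at hx
    suffices 0 < (a - b * t) / a from fun h => by simp [h] at this
    rw [hlin]
    -- `t` lies between `0` and `x`, where the affine function `1 - (b/a) t` is positive
    nlinarith [mul_nonpos_of_nonneg_of_nonpos (sq_nonneg (b / a)) hbetween]
  have hderiv : ∀ t ∈ uIcc x 0,
      HasDerivAt (fun t => -(a ^ 2 / b * t + a ^ 3 / b ^ 2 * log (a - b * t))) (rfun a b t) t := by
    intro t ht
    have hlin : HasDerivAt (fun t => a - b * t) (-(b * 1)) t :=
      ((hasDerivAt_id t).const_mul b).const_sub a
    refine ((((hasDerivAt_id t).const_mul (a ^ 2 / b)).add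
      ((hlin.log (hden t ht)).const_mul (a ^ 3 / b ^ 2))).neg).congr_deriv ?_
    have := hden t ht
    rw [rfun]
    field_simp
    ring
  have hint : IntervalIntegrable (rfun a b) MeasureTheory.volume x 0 :=
    (continuousOn_const.mul continuousOn_id).div (continuousOn_const.sub
      (continuousOn_const.mul continuousOn_id)) hden |>.intervalIntegrable
  rw [intervalIntegral.integral_eq_sub_of_hasDerivAt hderiv hint,
    log_div (hden x left_mem_uIcc) ha]
  simp only [mul_zero, sub_zero, zero_add]
  ring

theorem Afun_sub_rfun_mul_self_eq {a b x u : ℝ} (ha : a ≠ 0) (hb : b ≠ 0)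
    (hxu : b * x = a * (1 - u)) (hu : 0 < u) (hu1 : u ≠ 1) (hq : 2 + (6 * a + 1) * u ≠ 0) :
    (Afun a b x - rfun (a + 1 / 2) (b * (1 + 1 / (6 * a))) x) * x =
      (a / b) ^ 2 * (4 * a * (1 - u) ^ 4 / (u * (u + 2) * (2 + (6 * a + 1) * u)) +
        (2 * u * (u + 2) * log u - (u - 1) * (5 * u + 1)) / (2 * (u + 2))) := by
  have hu_eq : (a - b * x) / a = u := by rw [hxu]; field_simp; ring
  have hx0 : x ≠ 0 := by
    rintro rfl
    exact hu1 (by simpa [ha] using hu_eq.symm)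
  have hr : rfun a b x = a * x / u := by
    rw [rfun, ← hu_eq]
    field_simp
  have hR : rfun (a + 1 / 2) (b * (1 + 1 / (6 * a))) x =
      6 * (a + 1 / 2) ^ 2 * x / (2 + (6 * a + 1) * u) := by
    have : a + 1 / 2 - b * (1 + 1 / (6 * a)) * x = (2 + (6 * a + 1) * u) / 6 := by
      rw [mul_comm b, mul_assoc, hxu]; field_simp; ring
    rw [rfun, this]
    field_simp
  rw [Afun, if_neg hx0, integral_rfun hb (hu_eq ▸ hu), hu_eq, hr, hR]
  obtain rfl : x = a * (1 - u) / b := by field_simp; linarith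
  have hu2 : u + 2 ≠ 0 := by positivity
  have hu1' : 1 - u ≠ 0 := sub_ne_zero.mpr hu1.symm
  have hq' : 2 + u * (a * 6 + 1) ≠ 0 := by convert hq using 1; ring
  generalize log u = L
  field_simp
  ring

theorem Afun_sub_rfun_mul_self_pos {a b x u : ℝ} (ha : a < 0) (hb : b ≠ 0)
    (hxu : b * x = a * (1 - u)) (hu : 0 < u) (hu1 : u ≠ 1) (hq : 2 + (6 * a + 1) * u < 0) :
    0 < (Afun a b x - rfun (a + 1 / 2) (b * (1 + 1 / (6 * a))) x) * x := by
  rw [Afun_sub_rfun_mul_self_eq ha.ne hb hxu hu hu1 hq.ne]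
  have hfirst : 0 ≤ 4 * a * (1 - u) ^ 4 / (u * (u + 2) * (2 + (6 * a + 1) * u)) :=
    div_nonneg_of_nonpos (mul_nonpos_of_nonpos_of_nonneg (by linarith) (by positivity))
      (mul_nonpos_of_nonneg_of_nonpos (by positivity) hq.le)
  have hsecond : 0 < (2 * u * (u + 2) * log u - (u - 1) * (5 * u + 1)) / (2 * (u + 2)) :=
    div_pos (by linarith [sub_one_mul_five_mul_add_one_lt_mul_log hu hu1]) (by positivity)
  have hab : a / b ≠ 0 := div_ne_zero ha.ne hb
  exact mul_pos (by positivity) (by linarith)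

theorem Afun_vs_Rfun_general
    (f : ℝ → ℝ) (h2 : 0 < iteratedDeriv 2 f 0) (h1 : deriv f 0 < -1)
    (a b a₁ b₁ ν x₂ : ℝ)
    (haeq : a = deriv f 0) (hbeq : b = iteratedDeriv 2 f 0 / 2)
    (ha₁ : a₁ = a + 1 / 2) (hb₁ : b₁ = b * (1 + 1 / (6 * a)))
    (hν : ν = a₁ / b₁) :
    ∀ x ∈ Set.Ioo ν x₂, x ≠ 0 → (Afun a b x - rfun a₁ b₁ x) * x > 0 := by
  rintro x ⟨hνx, -⟩ hx0
  have ha : a < -1 := haeq ▸ h1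
  have hb : 0 < b := by rw [hbeq]; positivity
  subst ha₁ hb₁ hν
  set u := (a - b * x) / a with hu_def
  have hxu : b * x = a * (1 - u) := by
    rw [hu_def]
    field_simp [(by linarith : a ≠ 0)]
    ring
  have hb₁ : 0 < b * (1 + 1 / (6 * a)) := by
    refine mul_pos hb ?_
    rw [one_add_div (by linarith)]
    exact div_pos_of_neg_of_neg (by linarith) (by linarith)
  have hq : 2 + (6 * a + 1) * u < 0 := by
    have hlt := (div_lt_iff₀ hb₁).mp hνx
    have : x * (b * (1 + 1 / (6 * a))) = (6 * a + 1) * (1 - u) / 6 := by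
      rw [show x * (b * (1 + 1 / (6 * a))) = (1 + 1 / (6 * a)) * (b * x) by ring, hxu]
      field_simp [(by linarith : a ≠ 0)]
    linarith
  have hu : 0 < u := by nlinarith
  have hu1 : u ≠ 1 := by
    rintro h
    rw [h, sub_self, mul_zero] at hxu
    exact hx0 ((mul_eq_zero.mp hxu).resolve_left hb.ne')
  exact Afun_sub_rfun_mul_self_pos (by linarith) hb.ne' hxu hu hu1 hq

/-- Lemma 2.4 (Lemma 3.2 in the numbering of the paper): `(A(x) - R(x))·x > 0`
for `x ∈ (ν, x₂) \ {0}`, where `R(x) = r(x; A'(0), A''(0)/2)`,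
`A'(0) = f'(0) + 1/2` and `A''(0) = f''(0)(1 + 1/(6 f'(0)))`. -/
theorem Afun_vs_Rfun
    (f : ℝ → ℝ) (hf : HypH f) (h2 : 0 < iteratedDeriv 2 f 0) (h1 : deriv f 0 < -1)
    (a b a₁ b₁ ν x₂ : ℝ)
    (haeq : a = deriv f 0) (hbeq : b = iteratedDeriv 2 f 0 / 2)
    (ha₁ : a₁ = a + 1 / 2) (hb₁ : b₁ = b * (1 + 1 / (6 * a)))
    (hν : ν = a₁ / b₁) (hx₂ : x₂ = (a + a ^ 2) / b) :
    ∀ x ∈ Set.Ioo ν x₂, x ≠ 0 → (Afun a b x - rfun a₁ b₁ x) * x > 0 :=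
  Afun_vs_Rfun_general f h2 h1 a b a₁ b₁ ν x₂ haeq hbeq ha₁ hb₁ hν
end

section
/- For every pair (s, ζ) with s ∈ [−1, 0] and ζ ∈ [−1.5, −1.25], one has L(ζ,s) = s − ζ − ln(1 + s − ζ) + 2(ζ + 1/2)²(s − ζ)² / ((2ζ + 1)ζ² + (2/3)ζ(s − ζ)) < 0. -/
/-!
Put `x = s - ζ ≥ 1/4`. The series `log (b / a) = 2 artanh ((b - a) / (b + a))`, cut after
its first term at `a = 5/4`, gives `log (1 + x) ≥ log (5/4) + 2 (x - 1/4) / (x + 9/4)`, and two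
terms of the same series give `log (5/4) > 0.223`. The denominator of `L` is negative on the
rectangle, so after clearing denominators `L < 0` becomes a polynomial inequality in `x` and `ζ`;
on the region `x ≥ 1/4`, `ζ ≤ -5/4`, `x + 1 + ζ ≥ 0` it is a positive combination of products of
these constraints.
-/

open Real Set

theorem two_mul_sub_div_add_le_log_sub_log {a b : ℝ} (ha : 0 < a) (hab : a ≤ b) :
    2 * (b - a) / (b + a) ≤ log b - log a := by
  rcases hab.eq_or_lt with rfl | hlt
  · simp
  have hba₀ : b - a ≠ 0 := (sub_pos.2 hlt).ne'
  have hab₀ : b + a ≠ 0 := by linarith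
  have hsum := hasSum_log_one_add_inv (div_pos ha (sub_pos.2 hlt))
  have hfirst := le_hasSum hsum 0 fun k _ => by positivity
  have hba : 1 + (a / (b - a))⁻¹ = b / a := by field_simp; ring
  have hterm : 1 / (2 * (a / (b - a)) + 1) = (b - a) / (b + a) := by field_simp; ring
  rw [hba, log_div (by linarith) ha.ne', hterm] at hfirst
  simpa [mul_div_assoc] using hfirst

theorem log_five_div_four_gt : (223 / 1000 : ℝ) < log (5 / 4) := by
  have h := sum_le_hasSum (Finset.range 2) (fun k _ => by positivity)
    (hasSum_log_one_add_inv (by norm_num : (0 : ℝ) < 4))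
  norm_num [Finset.sum_range_succ] at h
  linarith

theorem log_one_add_gt_of_quarter_le {x : ℝ} (hx : 1 / 4 ≤ x) :
    223 / 1000 + 2 * (x - 1 / 4) / (x + 9 / 4) < log (1 + x) := by
  have h := two_mul_sub_div_add_le_log_sub_log (a := 5 / 4) (b := 1 + x) (by norm_num)
    (by linarith)
  ring_nf at h ⊢
  linarith [log_five_div_four_gt]

theorem cubic_denominator_neg {x ζ : ℝ} (hx : 0 ≤ x) (hζ : ζ < -1 / 2) :
    (2 * ζ + 1) * ζ ^ 2 + 2 / 3 * ζ * x < 0 :=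
  add_neg_of_neg_of_nonpos
    (mul_neg_of_neg_of_pos (by linarith) (sq_pos_of_neg (by linarith)))
    (mul_nonpos_of_nonpos_of_nonneg (by linarith) hx)

theorem cleared_polynomial_lt {x ζ : ℝ} (hx : 1 / 4 ≤ x) (hζ : ζ ≤ -5 / 4)
    (hxζ : -1 - ζ ≤ x) :
    ((x - 223 / 1000) * (x + 9 / 4) - 2 * (x - 1 / 4)) *
        -((2 * ζ + 1) * ζ ^ 2 + 2 / 3 * ζ * x) <
      2 * (ζ + 1 / 2) ^ 2 * x ^ 2 * (x + 9 / 4) := by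
  have ha : 0 ≤ x - 1 / 4 := by linarith
  have hq : 0 ≤ -5 / 4 - ζ := by linarith
  have hv : 0 ≤ x + 1 + ζ := by linarith
  nlinarith [mul_nonneg ha hq, mul_nonneg hv hq, mul_nonneg (mul_nonneg hv ha) hq,
    mul_nonneg (mul_nonneg ha ha) hq, mul_nonneg (mul_nonneg hv hq) hq, mul_nonneg ha ha]

theorem sub_log_bound_add_div_neg {x ζ : ℝ} (hx : 1 / 4 ≤ x) (hζ : ζ ≤ -5 / 4)
    (hxζ : -1 - ζ ≤ x) :
    x - (223 / 1000 + 2 * (x - 1 / 4) / (x + 9 / 4)) +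
      2 * (ζ + 1 / 2) ^ 2 * x ^ 2 / ((2 * ζ + 1) * ζ ^ 2 + 2 / 3 * ζ * x) < 0 := by
  have hD := cubic_denominator_neg (by linarith : 0 ≤ x) (by linarith : ζ < -1 / 2)
  have hx₀ : 0 < x + 9 / 4 := by linarith
  rw [add_comm, ← lt_neg_iff_add_neg, div_lt_iff_of_neg hD]
  have hcleared : -(x - (223 / 1000 + 2 * (x - 1 / 4) / (x + 9 / 4))) *
      ((2 * ζ + 1) * ζ ^ 2 + 2 / 3 * ζ * x) =
      ((x - 223 / 1000) * (x + 9 / 4) - 2 * (x - 1 / 4)) *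
        -((2 * ζ + 1) * ζ ^ 2 + 2 / 3 * ζ * x) / (x + 9 / 4) := by
    field_simp
    ring
  rw [hcleared, div_lt_iff₀ hx₀]
  exact cleared_polynomial_lt hx hζ hxζ

/-- Lemma 2.5: `L(ζ, s) < 0` on the rectangle `[-1, 0] × [-1.5, -1.25]`. -/
theorem Lfun_negative_on_rectangle
    (s ζ : ℝ) (hs : s ∈ Set.Icc (-1 : ℝ) 0) (hζ : ζ ∈ Set.Icc (-1.5 : ℝ) (-1.25)) :
    s - ζ - Real.log (1 + s - ζ) +
      2 * (ζ + 1 / 2) ^ 2 * (s - ζ) ^ 2 /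
        ((2 * ζ + 1) * ζ ^ 2 + (2 / 3) * ζ * (s - ζ)) < 0 := by
  obtain ⟨hs₁, -⟩ := hs
  obtain ⟨-, hζ₂⟩ := hζ
  norm_num at hζ₂
  have hx : 1 / 4 ≤ s - ζ := by linarith
  have hlog := log_one_add_gt_of_quarter_le hx
  have hbound := sub_log_bound_add_div_neg hx (by linarith) (by linarith : -1 - ζ ≤ s - ζ)
  rw [← add_sub_assoc] at hlog
  linarith
end

section
/- Let f : ℝ → ℝ be continuous, differentiable at 0, bounded below, with x·f(x) < 0 for all x ≠ 0 and (f(x) − f'(0)x)·x > 0 for all x ≠ 0. Let m < 0 < M. (i) If z : ℝ → ℝ is an entire solution of x'(t) = f(x(t−1)) with m ≤ z(t) ≤ M for all t and z(1) = m, then m > −(f'(0))²·M/2 whenever f'(0) < 0, and m > (f'(0) + 1/2)·M whenever f'(0) ≤ −1. (ii) If y : ℝ → ℝ is an entire solution with m ≤ y(t) ≤ M for all t and y(1) = M, then M < f'(0)·m whenever f'(0) < 0, and M < (f'(0) + 1/2)·m whenever f'(0) ≤ −1. -/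
/-!
If `z` attains its minimum `m = z 1`, Fermat's rule gives `f (z 0) = 0`, so `z 0 = 0` and
`m = ∫_{-1}^0 f (z s) ds`. With `a = f'(0)`, the tangent inequality makes `f > a M` on
`(-∞, M]`, hence `z' > a M` and `z s ≤ a M s` on `[-1, 0]`; feeding this back in gives
`f (z s) > a · min (a M s) M` there. Integrating this minorant yields the bounds on `m`.
The bounds on `M` are the same statement for the reflected equation `x' = -f (-x (t - 1))`,
solved by `-y`, whose minimum `-M` sits at `t = 1`.
-/

open Set MeasureTheory

def IsEntireSolution (f z : ℝ → ℝ) : Prop :=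
  ∀ t, HasDerivAt z (f (z (t - 1))) t

section Feedback

variable {f : ℝ → ℝ} {a b x : ℝ}

lemma apply_zero_eq_zero_of_mul_neg (hc : Continuous f) (hfeed : ∀ x, x ≠ 0 → x * f x < 0) :
    f 0 = 0 := by
  have hpos : ∀ x ∈ Ioi (0 : ℝ), f x ≤ 0 := fun x (hx : 0 < x) => by
    nlinarith [hfeed x hx.ne']
  have hneg : ∀ x ∈ Iio (0 : ℝ), 0 ≤ f x := fun x (hx : x < 0) => by
    nlinarith [hfeed x hx.ne]
  have hle : f 0 ≤ 0 := le_of_tendsto (hc.continuousAt.continuousWithinAt.tendsto (s := Ioi 0))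
    (eventually_nhdsWithin_of_forall hpos)
  have hge : 0 ≤ f 0 := ge_of_tendsto (hc.continuousAt.continuousWithinAt.tendsto (s := Iio 0))
    (eventually_nhdsWithin_of_forall hneg)
  exact le_antisymm hle hge

lemma mul_lt_apply_of_le (hfeed : ∀ x, x ≠ 0 → x * f x < 0) (hf0 : f 0 = 0)
    (htan : ∀ x, 0 < x → a * x < f x) (hb : 0 < b) (hx : x ≤ b) :
    a * b < f x := by
  have ha : a < 0 := by linarith [htan 1 one_pos, hfeed 1 one_ne_zero]
  rcases lt_trichotomy x 0 with hx0 | rfl | hx0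
  · linarith [pos_of_mul_neg_right (hfeed x hx0.ne) hx0.le, mul_neg_of_neg_of_pos ha hb]
  · linarith [mul_neg_of_neg_of_pos ha hb]
  · nlinarith [htan x hx0]

end Feedback

section MinorantIntegral

variable {a M : ℝ}

lemma continuous_mul_min_mul : Continuous fun s : ℝ => a * min (a * M * s) M := by fun_prop

lemma mul_le_integral_mul_min (ha : a ≤ 0) :
    a * M ≤ ∫ s in (-1 : ℝ)..0, a * min (a * M * s) M := by
  have h := intervalIntegral.integral_mono_on (by norm_num : (-1 : ℝ) ≤ 0)
    (intervalIntegrable_const (μ := volume))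
    (continuous_mul_min_mul.intervalIntegrable _ _)
    fun s _ => mul_le_mul_of_nonpos_left (min_le_right (a * M * s) M) ha
  simpa using h

lemma neg_sq_mul_div_two_le_integral_mul_min (ha : a ≤ 0) :
    -a ^ 2 * M / 2 ≤ ∫ s in (-1 : ℝ)..0, a * min (a * M * s) M := by
  have h := intervalIntegral.integral_mono_on (by norm_num : (-1 : ℝ) ≤ 0)
    (f := fun s => a ^ 2 * M * s)
    ((continuous_const.mul continuous_id).intervalIntegrable (μ := volume) _ _)
    (continuous_mul_min_mul.intervalIntegrable _ _)
    fun s _ => by nlinarith [mul_le_mul_of_nonpos_left (min_le_left (a * M * s) M) ha]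
  rw [intervalIntegral.integral_const_mul, integral_id] at h
  linarith

/-- The kink of the integrand sits at `s = 1 / a`, which lies in `[-1, 0]` when `a ≤ -1`. -/
lemma integral_mul_min_of_le_neg_one (ha : a ≤ -1) (hM : 0 ≤ M) :
    ∫ s in (-1 : ℝ)..0, a * min (a * M * s) M = (a + 1 / 2) * M := by
  have ha0 : a < 0 := by linarith
  have ha0' : a ≠ 0 := ha0.ne
  have haM : a * M ≤ 0 := mul_nonpos_of_nonpos_of_nonneg ha0.le hM
  have hkink : a * M * (1 / a) = M := by field_simp
  have hleft : (-1 : ℝ) ≤ 1 / a := by rw [le_div_iff_of_neg ha0]; linarith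
  have hright : 1 / a ≤ (0 : ℝ) := one_div_nonpos.2 ha0.le
  have hI₁ : ∫ s in (-1 : ℝ)..(1 / a), a * min (a * M * s) M =
      ∫ _ in (-1 : ℝ)..(1 / a), a * M := by
    refine intervalIntegral.integral_congr fun s hs => ?_
    rw [uIcc_of_le hleft] at hs
    have : M ≤ a * M * s := by simpa only [hkink] using mul_le_mul_of_nonpos_left hs.2 haM
    simp only [min_eq_right this]
  have hI₂ : ∫ s in (1 / a)..(0 : ℝ), a * min (a * M * s) M =
      ∫ s in (1 / a)..(0 : ℝ), a ^ 2 * M * s := by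
    refine intervalIntegral.integral_congr fun s hs => ?_
    rw [uIcc_of_le hright] at hs
    have : a * M * s ≤ M := by simpa only [hkink] using mul_le_mul_of_nonpos_left hs.1 haM
    simp only [min_eq_left this]
    ring
  rw [← intervalIntegral.integral_add_adjacent_intervals (b := 1 / a)
    (continuous_mul_min_mul.intervalIntegrable _ _) (continuous_mul_min_mul.intervalIntegrable _ _),
    hI₁, hI₂, intervalIntegral.integral_const, intervalIntegral.integral_const_mul, integral_id,
    smul_eq_mul]
  field_simp
  ring

end MinorantIntegral

namespace IsEntireSolution

variable {f z : ℝ → ℝ}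

lemma continuous (hz : IsEntireSolution f z) : Continuous z :=
  continuous_iff_continuousAt.2 fun t => (hz t).continuousAt

lemma neg (hz : IsEntireSolution f z) : IsEntireSolution (fun x => -f (-x)) (fun t => -z t) :=
  fun t => by
    have := (hz t).neg
    simp only [neg_neg]
    exact this

lemma apply_zero_eq_zero_of_forall_le (hz : IsEntireSolution f z)
    (hfeed : ∀ x, x ≠ 0 → x * f x < 0) (hmin : ∀ t, z 1 ≤ z t) : z 0 = 0 := by
  have hcrit : f (z (1 - 1)) = 0 := IsLocalMin.hasDerivAt_eq_zero
    (Filter.Eventually.of_forall hmin) (hz 1)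
  rw [sub_self] at hcrit
  by_contra h
  simpa [hcrit] using hfeed _ h

lemma apply_one_eq_integral (hz : IsEntireSolution f z) (hc : Continuous f) (h0 : z 0 = 0) :
    z 1 = ∫ s in (-1 : ℝ)..0, f (z s) := by
  have hFTC := intervalIntegral.integral_eq_sub_of_hasDerivAt (fun u _ => hz u)
    ((hc.comp (hz.continuous.comp (continuous_sub_right 1))).intervalIntegrable 0 1)
  rw [intervalIntegral.integral_comp_sub_right (fun s => f (z s))] at hFTC
  norm_num [h0] at hFTC
  exact hFTC.symm

lemma apply_le_mul_of_nonpos (hz : IsEntireSolution f z) {c s : ℝ} (hlow : ∀ t, c ≤ f (z t))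
    (h0 : z 0 = 0) (hs : s ≤ 0) : z s ≤ c * s := by
  have hmono : Monotone fun t => z t - c * t := monotone_of_hasDerivAt_nonneg
    (fun t => (hz t).sub ((hasDerivAt_id t).const_mul c)) fun t => by
      simpa using hlow (t - 1)
  simpa [h0] using hmono hs

lemma integral_lt_apply_one (hz : IsEntireSolution f z) (hc : Continuous f)
    (hfeed : ∀ x, x ≠ 0 → x * f x < 0) {a M : ℝ} (htan : ∀ x, 0 < x → a * x < f x)
    (hM : 0 < M) (hle : ∀ t, z t ≤ M) (hmin : ∀ t, z 1 ≤ z t) :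
    ∫ s in (-1 : ℝ)..0, a * min (a * M * s) M < z 1 := by
  have ha : a < 0 := by linarith [htan 1 one_pos, hfeed 1 one_ne_zero]
  have hf0 := apply_zero_eq_zero_of_mul_neg hc hfeed
  have h0 := hz.apply_zero_eq_zero_of_forall_le hfeed hmin
  have hlow : ∀ t, a * M ≤ f (z t) := fun t =>
    (mul_lt_apply_of_le hfeed hf0 htan hM (hle t)).le
  have hbound : ∀ s ∈ Ioo (-1 : ℝ) 0, a * min (a * M * s) M < f (z s) := fun s hs => by
    refine mul_lt_apply_of_le hfeed hf0 htan
      (lt_min (mul_pos_of_neg_of_neg (mul_neg_of_neg_of_pos ha hM) hs.2) hM) (le_min ?_ (hle s))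
    exact hz.apply_le_mul_of_nonpos hlow h0 hs.2.le
  have hFc : Continuous fun s => f (z s) := hc.comp hz.continuous
  have hpos := intervalIntegral.intervalIntegral_pos_of_pos_on
    (f := fun s => f (z s) - a * min (a * M * s) M)
    ((hFc.sub continuous_mul_min_mul).intervalIntegrable (-1) 0)
    (fun s hs => sub_pos.2 (hbound s hs)) (by norm_num)
  rw [intervalIntegral.integral_sub (hFc.intervalIntegrable _ _)
    (continuous_mul_min_mul.intervalIntegrable _ _),
    ← hz.apply_one_eq_integral hc h0] at hpos
  linarith

end IsEntireSolution

theorem linear_minorant_estimates_general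
    (f : ℝ → ℝ) (hc : Continuous f)
    (hfeed : ∀ x : ℝ, x ≠ 0 → x * f x < 0)
    (htan : ∀ x : ℝ, x ≠ 0 → (f x - deriv f 0 * x) * x > 0)
    (m M : ℝ) (hm : m < 0) (hM : 0 < M) :
    (∀ z : ℝ → ℝ, (∀ t : ℝ, HasDerivAt z (f (z (t - 1))) t) →
      (∀ t : ℝ, m ≤ z t ∧ z t ≤ M) → z 1 = m →
      (deriv f 0 < 0 → m > -(deriv f 0) ^ 2 * M / 2) ∧
      (deriv f 0 ≤ -1 → m > (deriv f 0 + 1 / 2) * M)) ∧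
    (∀ y : ℝ → ℝ, (∀ t : ℝ, HasDerivAt y (f (y (t - 1))) t) →
      (∀ t : ℝ, m ≤ y t ∧ y t ≤ M) → y 1 = M →
      (deriv f 0 < 0 → M < deriv f 0 * m) ∧
      (deriv f 0 ≤ -1 → M < (deriv f 0 + 1 / 2) * m)) := by
  have htan_pos : ∀ x, 0 < x → deriv f 0 * x < f x := fun x hx => by
    nlinarith [htan x hx.ne']
  have htan_neg : ∀ x, 0 < x → deriv f 0 * x < -f (-x) := fun x hx => by
    nlinarith [htan (-x) (neg_ne_zero.2 hx.ne')]
  have hfeed_neg : ∀ x, x ≠ 0 → x * -f (-x) < 0 := fun x hx => by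
    nlinarith [hfeed (-x) (neg_ne_zero.2 hx)]
  refine ⟨fun z hz hb h1 => ?_, fun y hy hb h1 => ?_⟩
  · have key := h1 ▸ IsEntireSolution.integral_lt_apply_one hz hc hfeed htan_pos hM
      (fun t => (hb t).2) (fun t => h1 ▸ (hb t).1)
    exact ⟨fun ha => by linarith [neg_sq_mul_div_two_le_integral_mul_min (M := M) ha.le],
      fun ha => by linarith [integral_mul_min_of_le_neg_one ha hM.le]⟩
  · have key := IsEntireSolution.integral_lt_apply_one (IsEntireSolution.neg hy) (by fun_prop)
      hfeed_neg htan_neg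
      (neg_pos.2 hm) (fun t => neg_le_neg (hb t).1) (fun t => h1 ▸ neg_le_neg (hb t).2)
    rw [h1] at key
    exact ⟨fun ha => by linarith [mul_le_integral_mul_min (M := -m) ha.le],
      fun ha => by linarith [integral_mul_min_of_le_neg_one ha (neg_pos.2 hm).le]⟩

/-- Remark 3.4: estimates for entire solutions when the graph of `f` lies
strictly above its tangent line `f'(0)·x` for `x > 0` and strictly below it
for `x < 0`. -/
theorem linear_minorant_estimates
    (f : ℝ → ℝ) (hc : Continuous f) (hd : DifferentiableAt ℝ f 0)
    (hbdd : ∃ C : ℝ, ∀ x : ℝ, C ≤ f x)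
    (hfeed : ∀ x : ℝ, x ≠ 0 → x * f x < 0)
    (htan : ∀ x : ℝ, x ≠ 0 → (f x - deriv f 0 * x) * x > 0)
    (m M : ℝ) (hm : m < 0) (hM : 0 < M) :
    (∀ z : ℝ → ℝ, (∀ t : ℝ, HasDerivAt z (f (z (t - 1))) t) →
      (∀ t : ℝ, m ≤ z t ∧ z t ≤ M) → z 1 = m →
      (deriv f 0 < 0 → m > -(deriv f 0) ^ 2 * M / 2) ∧
      (deriv f 0 ≤ -1 → m > (deriv f 0 + 1 / 2) * M)) ∧
    (∀ y : ℝ → ℝ, (∀ t : ℝ, HasDerivAt y (f (y (t - 1))) t) →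
      (∀ t : ℝ, m ≤ y t ∧ y t ≤ M) → y 1 = M →
      (deriv f 0 < 0 → M < deriv f 0 * m) ∧
      (deriv f 0 ≤ -1 → M < (deriv f 0 + 1 / 2) * m)) :=
  linear_minorant_estimates_general f hc hfeed htan m M hm hM
end
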